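/- Let g be a Schwartz function on ℝ and f ∈ L²(ℝ). Then for all (t, ξ, λ) ∈ ℝ³: ∂³_{ttt} T_f^{(g)} = −T_f^{(g''')} + 6πi ξ T_f^{(g'')} + 6πi λ T_f^{(tg'')} + [6πi λ − 12(iπξ)²] T_f^{(g')} − 24(iπξ)(iπλ) T_f^{(tg')} + [8(iπξ)³ − 12(iπλ)(iπξ)] T_f^{(g)} − 12(iπλ)² T_f^{(t²g')} + [24(iπξ)²(iπλ) − 12(iπλ)²] T_f^{(tg)} + 24(iπλ)²(iπξ) T_f^{(t²g)} + 8(iπλ)³ T_f^{(t³g)}, where all transforms are evaluated at (t, ξ, λ). -/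

import Mathlib

open MeasureTheory Real Complex Finset

noncomputable section

/-- The chirplet transform of `f` with window `g`. -/
def CT (f g : ℝ → ℂ) (t ξ lam : ℝ) : ℂ :=
  ∫ x : ℝ, f x * (starRingEnd ℂ) (g (x - t)) *
    Complex.exp (-(2 * (π : ℂ) * Complex.I * (ξ : ℂ) * ((x : ℂ) - (t : ℂ)))
      - Complex.I * (π : ℂ) * (lam : ℂ) * ((x : ℂ) - (t : ℂ)) ^ 2)

/-- The window `x ↦ x^n g x`. -/
def tw (n : ℕ) (g : ℝ → ℂ) : ℝ → ℂ := fun x => (x : ℂ) ^ n * g x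

/-- The chirplet transform as a function of the time variable. -/
def Tt (f g : ℝ → ℂ) (ξ lam : ℝ) : ℝ → ℂ := fun t => CT f g t ξ lam

/-!
Differentiating under the integral sign (legitimate because `f ∈ L²` and every Schwartz window
decays like `1 / (1 + u²)`, uniformly under small translations) gives `∂ₜ T_f^{(h)} = T_f^{(D h)}`
with the first-order operator `D h = -h' - 2πiξ h - 2πiλ x h` on Schwartz space. Hence
`∂³ₜ T_f^{(g)} = T_f^{(D³ g)}`. Expanding `D³ g` with the commutation rule `(x h)' = x h' + h`
and using that the transform is conjugate-linear in the window yields the formula.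
-/

open SchwartzMap ComplexConjugate

theorem SchwartzMap.exists_norm_le_div_one_add_sq {F : Type*} [NormedAddCommGroup F]
    [NormedSpace ℝ F] (h : 𝓢(ℝ, F)) : ∃ C, ∀ u, ‖h u‖ ≤ C / (1 + u ^ 2) := by
  obtain ⟨C₀, -, h₀⟩ := h.decay 0 0
  obtain ⟨C₂, -, h₂⟩ := h.decay 2 0
  refine ⟨C₀ + C₂, fun u => ?_⟩
  specialize h₀ u
  specialize h₂ u
  simp only [norm_iteratedFDeriv_zero, pow_zero, one_mul, Real.norm_eq_abs, sq_abs] at h₀ h₂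
  rw [le_div_iff₀ (by positivity)]
  linarith

lemma div_one_add_sq_sub_le {C : ℝ} (hC : 0 ≤ C) {u s : ℝ} (hs : |s| ≤ 1) :
    C / (1 + (u - s) ^ 2) ≤ 3 * C / (1 + u ^ 2) := by
  have hs2 : s ^ 2 ≤ 1 := by nlinarith [sq_abs s, abs_nonneg s]
  rw [div_le_div_iff₀ (by positivity) (by positivity)]
  nlinarith [mul_nonneg hC (sq_nonneg (u - 2 * s)), mul_nonneg hC (sub_nonneg.2 hs2)]

lemma memLp_two_div_one_add_sq_sub (C t : ℝ) :
    MemLp (fun x : ℝ => C / (1 + (x - t) ^ 2)) 2 := by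
  have hcont : Continuous fun x : ℝ => C / (1 + (x - t) ^ 2) :=
    continuous_const.div (by fun_prop) fun x => by positivity
  rw [memLp_two_iff_integrable_sq hcont.aestronglyMeasurable]
  refine ((integrable_inv_one_add_sq.comp_sub_right t).const_mul (C ^ 2)).mono'
    (hcont.pow 2).aestronglyMeasurable (Filter.Eventually.of_forall fun x => ?_)
  have hx : 1 ≤ 1 + (x - t) ^ 2 := by nlinarith [sq_nonneg (x - t)]
  rw [Real.norm_eq_abs, abs_of_nonneg (by positivity), div_pow, ← div_eq_mul_inv]
  gcongr
  nlinarith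

section Translate

variable {𝕜 : Type*} [RCLike 𝕜] {f : ℝ → 𝕜}

lemma integrable_norm_mul_div_one_add_sq (hf : MemLp f 2) (C t : ℝ) :
    Integrable fun x => ‖f x‖ * (C / (1 + (x - t) ^ 2)) :=
  hf.norm.integrable_mul (memLp_two_div_one_add_sq_sub C t)

lemma integrable_mul_comp_sub (hf : MemLp f 2) {k : ℝ → 𝕜} (hk : Continuous k) {C : ℝ}
    (hkC : ∀ u, ‖k u‖ ≤ C / (1 + u ^ 2)) (t : ℝ) :
    Integrable fun x => f x * k (x - t) := by
  refine (integrable_norm_mul_div_one_add_sq hf C t).mono'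
    (hf.1.mul (hk.comp (continuous_sub_right t)).aestronglyMeasurable)
    (Filter.Eventually.of_forall fun x => ?_)
  rw [norm_mul]
  exact mul_le_mul_of_nonneg_left (hkC _) (norm_nonneg _)

lemma hasDerivAt_integral_mul_comp_sub (hf : MemLp f 2) {k k' : ℝ → 𝕜}
    (hk : ∀ u, HasDerivAt k (k' u) u) (hk' : Continuous k') {C C' : ℝ}
    (hkC : ∀ u, ‖k u‖ ≤ C / (1 + u ^ 2)) (hk'C : ∀ u, ‖k' u‖ ≤ C' / (1 + u ^ 2)) (t : ℝ) :
    HasDerivAt (fun s => ∫ x, f x * k (x - s)) (-∫ x, f x * k' (x - t)) t := by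
  have hC' : 0 ≤ C' := by simpa using (norm_nonneg _).trans (hk'C 0)
  have hk_cont : Continuous k := continuous_iff_continuousAt.2 fun u => (hk u).continuousAt
  rw [← integral_neg]
  refine (hasDerivAt_integral_of_dominated_loc_of_deriv_le (Metric.ball_mem_nhds t one_pos)
    (Filter.Eventually.of_forall fun s =>
      (integrable_mul_comp_sub hf hk_cont hkC s).aestronglyMeasurable)
    (integrable_mul_comp_sub hf hk_cont hkC t)
    (F' := fun s x => -(f x * k' (x - s)))
    (integrable_mul_comp_sub hf hk' hk'C t).neg.aestronglyMeasurable
    (bound := fun x => ‖f x‖ * (3 * C' / (1 + (x - t) ^ 2))) ?_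
    (integrable_norm_mul_div_one_add_sq hf _ t) ?_).2
  · refine Filter.Eventually.of_forall fun x s hs => ?_
    rw [Metric.mem_ball, Real.dist_eq] at hs
    have hshift := div_one_add_sq_sub_le hC' (u := x - t) hs.le
    rw [sub_sub_sub_cancel_right] at hshift
    rw [norm_neg, norm_mul]
    exact mul_le_mul_of_nonneg_left ((hk'C _).trans hshift) (norm_nonneg _)
  · refine Filter.Eventually.of_forall fun x s _ => ?_
    have hsub : HasDerivAt (fun s : ℝ => x - s) (-1) s := by
      simpa using (hasDerivAt_id s).const_sub x
    simpa using ((hk (x - s)).scomp s hsub).const_mul (f x)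

end Translate

namespace Chirplet

def chirp (ξ lam u : ℝ) : ℂ :=
  Complex.exp (-(2 * π * I * ξ * u) - I * π * lam * u ^ 2)

lemma norm_chirp (ξ lam u : ℝ) : ‖chirp ξ lam u‖ = 1 := by
  simp [chirp, Complex.norm_exp, Complex.mul_re, Complex.mul_im, pow_two]

lemma continuous_chirp (ξ lam : ℝ) : Continuous (chirp ξ lam) := by
  unfold chirp
  fun_prop

lemma hasDerivAt_chirp (ξ lam u : ℝ) :
    HasDerivAt (chirp ξ lam) ((-(2 * π * I * ξ) - 2 * π * I * lam * u) * chirp ξ lam u) u := by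
  have hu : HasDerivAt (fun v : ℝ => (v : ℂ)) 1 u := (hasDerivAt_id u).ofReal_comp
  convert (((hu.const_mul (2 * π * I * ξ)).fun_neg).fun_sub
    ((hu.fun_pow 2).const_mul (I * π * lam))).cexp using 1
  · rfl
  · simp only [chirp]
    push_cast
    ring

def kernel (ξ lam : ℝ) (h : ℝ → ℂ) (u : ℝ) : ℂ := conj (h u) * chirp ξ lam u

lemma CT_eq_integral_kernel (f h : ℝ → ℂ) (t ξ lam : ℝ) :
    CT f h t ξ lam = ∫ x, f x * kernel ξ lam h (x - t) := by
  simp only [CT, kernel, chirp, ← mul_assoc]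
  push_cast
  rfl

lemma norm_kernel (ξ lam : ℝ) (h : ℝ → ℂ) (u : ℝ) : ‖kernel ξ lam h u‖ = ‖h u‖ := by
  simp [kernel, norm_chirp]

lemma continuous_kernel (ξ lam : ℝ) (h : 𝓢(ℝ, ℂ)) : Continuous (kernel ξ lam h) :=
  (Complex.continuous_conj.comp h.continuous).mul (continuous_chirp ξ lam)

lemma exists_norm_kernel_le (ξ lam : ℝ) (h : 𝓢(ℝ, ℂ)) :
    ∃ C, ∀ u, ‖kernel ξ lam h u‖ ≤ C / (1 + u ^ 2) := by
  obtain ⟨C, hC⟩ := h.exists_norm_le_div_one_add_sq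
  exact ⟨C, fun u => (norm_kernel ξ lam h u).trans_le (hC u)⟩

def mulX : 𝓢(ℝ, ℂ) →L[ℂ] 𝓢(ℝ, ℂ) := smulLeftCLM ℂ Complex.ofReal

lemma coe_mulX (h : 𝓢(ℝ, ℂ)) : ⇑(mulX h) = tw 1 h := by
  ext x
  simp [mulX, tw, smulLeftCLM_apply_apply (by fun_prop : Function.HasTemperateGrowth ofReal)]

lemma coe_derivCLM (h : 𝓢(ℝ, ℂ)) : ⇑(derivCLM ℂ ℂ h) = deriv h := rfl

lemma derivCLM_mulX (h : 𝓢(ℝ, ℂ)) : derivCLM ℂ ℂ (mulX h) = mulX (derivCLM ℂ ℂ h) + h := by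
  ext x
  have hx : HasDerivAt (fun y : ℝ => (y : ℂ)) 1 x := (hasDerivAt_id x).ofReal_comp
  have hd : HasDerivAt (tw 1 h) (1 * h x + x * deriv h x) x := by
    show HasDerivAt (fun y : ℝ => (y : ℂ) ^ 1 * h y) _ x
    simpa only [pow_one] using hx.fun_mul (h.hasDerivAt x)
  rw [add_apply, coe_derivCLM, coe_mulX, coe_mulX, hd.deriv]
  simp only [tw, pow_one, coe_derivCLM]
  ring

/-- The coefficients are those of `∂ₜ T_f^{(h)} = -T_f^{(h')} + 2πiξ T_f^{(h)} + 2πiλ T_f^{(xh)}`,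
negated because the transform is conjugate-linear in the window. -/
def timeDerivWindow (ξ lam : ℝ) : 𝓢(ℝ, ℂ) →L[ℂ] 𝓢(ℝ, ℂ) :=
  -derivCLM ℂ ℂ - (2 * π * I * ξ : ℂ) • ContinuousLinearMap.id ℂ _ - (2 * π * I * lam : ℂ) • mulX

lemma timeDerivWindow_apply (ξ lam : ℝ) (h : 𝓢(ℝ, ℂ)) :
    timeDerivWindow ξ lam h =
      -derivCLM ℂ ℂ h - (2 * π * I * ξ : ℂ) • h - (2 * π * I * lam : ℂ) • mulX h :=
  rfl

lemma hasDerivAt_kernel (ξ lam : ℝ) (h : 𝓢(ℝ, ℂ)) (u : ℝ) :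
    HasDerivAt (kernel ξ lam h) (-kernel ξ lam (timeDerivWindow ξ lam h) u) u := by
  refine HasDerivAt.congr_deriv (f := kernel ξ lam h)
    ((h.hasDerivAt u).star.fun_mul (hasDerivAt_chirp ξ lam u)) ?_
  simp only [RCLike.star_def, kernel, timeDerivWindow_apply, sub_apply, neg_apply, derivCLM_apply,
    smul_apply, smul_eq_mul, coe_mulX, tw, pow_one, map_sub, map_neg, map_mul, map_ofNat,
    conj_ofReal, conj_I]
  ring

variable {f : ℝ → ℂ}

theorem hasDerivAt_Tt (hf : MemLp f 2) (h : 𝓢(ℝ, ℂ)) (ξ lam t : ℝ) :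
    HasDerivAt (Tt f h ξ lam) (CT f (timeDerivWindow ξ lam h) t ξ lam) t := by
  obtain ⟨C, hC⟩ := exists_norm_kernel_le ξ lam h
  obtain ⟨C', hC'⟩ := exists_norm_kernel_le ξ lam (timeDerivWindow ξ lam h)
  have := hasDerivAt_integral_mul_comp_sub hf (hasDerivAt_kernel ξ lam h)
    (continuous_kernel ξ lam _).neg hC (fun u => (norm_neg _).trans_le (hC' u)) t
  simp only [mul_neg, integral_neg, neg_neg] at this
  have hT : Tt f h ξ lam = fun s => ∫ x, f x * kernel ξ lam h (x - s) :=
    funext fun s => CT_eq_integral_kernel f h s ξ lam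
  rwa [hT, CT_eq_integral_kernel]

theorem deriv_Tt (hf : MemLp f 2) (h : 𝓢(ℝ, ℂ)) (ξ lam : ℝ) :
    deriv (Tt f h ξ lam) = Tt f (timeDerivWindow ξ lam h) ξ lam :=
  funext fun t => (hasDerivAt_Tt hf h ξ lam t).deriv

lemma integrable_mul_kernel (hf : MemLp f 2) (ξ lam : ℝ) (h : 𝓢(ℝ, ℂ)) (t : ℝ) :
    Integrable fun x => f x * kernel ξ lam h (x - t) :=
  have ⟨_, hC⟩ := exists_norm_kernel_le ξ lam h
  integrable_mul_comp_sub hf (continuous_kernel ξ lam h) hC t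

def CTₗ (hf : MemLp f 2) (t ξ lam : ℝ) : 𝓢(ℝ, ℂ) →ₗ⋆[ℂ] ℂ where
  toFun h := CT f h t ξ lam
  map_add' h₁ h₂ := by
    simp only [CT_eq_integral_kernel]
    rw [← integral_add (integrable_mul_kernel hf ξ lam h₁ t) (integrable_mul_kernel hf ξ lam h₂ t)]
    congr 1 with x
    simp only [kernel, add_apply, map_add]
    ring
  map_smul' c h := by
    simp only [CT_eq_integral_kernel]
    rw [smul_eq_mul, ← integral_const_mul]
    congr 1 with x
    simp only [kernel, smul_apply, smul_eq_mul, map_mul]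
    ring

lemma CTₗ_apply (hf : MemLp f 2) (t ξ lam : ℝ) (h : 𝓢(ℝ, ℂ)) :
    CTₗ hf t ξ lam h = CT f h t ξ lam :=
  rfl

lemma tw_one_tw (n : ℕ) (w : ℝ → ℂ) : tw 1 (tw n w) = tw (n + 1) w := by
  ext x
  simp only [tw]
  ring

end Chirplet

open Chirplet in
theorem chirplet_deriv_replacement_third
    (g : SchwartzMap ℝ ℂ) (f : ℝ → ℂ) (hf : MemLp f 2 (volume : Measure ℝ))
    (t ξ lam : ℝ) :
    deriv (deriv (deriv (Tt f (⇑g) ξ lam))) t =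
      -CT f (deriv (deriv (deriv (⇑g)))) t ξ lam
        + 6 * (π : ℂ) * Complex.I * (ξ : ℂ) * CT f (deriv (deriv (⇑g))) t ξ lam
        + 6 * (π : ℂ) * Complex.I * (lam : ℂ) * CT f (tw 1 (deriv (deriv (⇑g)))) t ξ lam
        + (6 * (π : ℂ) * Complex.I * (lam : ℂ)
            - 12 * (Complex.I * (π : ℂ) * (ξ : ℂ)) ^ 2) * CT f (deriv (⇑g)) t ξ lam
        - 24 * (Complex.I * (π : ℂ) * (ξ : ℂ)) * (Complex.I * (π : ℂ) * (lam : ℂ))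
            * CT f (tw 1 (deriv (⇑g))) t ξ lam
        + (8 * (Complex.I * (π : ℂ) * (ξ : ℂ)) ^ 3
            - 12 * (Complex.I * (π : ℂ) * (lam : ℂ)) * (Complex.I * (π : ℂ) * (ξ : ℂ)))
            * CT f (⇑g) t ξ lam
        - 12 * (Complex.I * (π : ℂ) * (lam : ℂ)) ^ 2 * CT f (tw 2 (deriv (⇑g))) t ξ lam
        + (24 * (Complex.I * (π : ℂ) * (ξ : ℂ)) ^ 2 * (Complex.I * (π : ℂ) * (lam : ℂ))
            - 12 * (Complex.I * (π : ℂ) * (lam : ℂ)) ^ 2) * CT f (tw 1 (⇑g)) t ξ lam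
        + 24 * (Complex.I * (π : ℂ) * (lam : ℂ)) ^ 2 * (Complex.I * (π : ℂ) * (ξ : ℂ))
            * CT f (tw 2 (⇑g)) t ξ lam
        + 8 * (Complex.I * (π : ℂ) * (lam : ℂ)) ^ 3 * CT f (tw 3 (⇑g)) t ξ lam := by
  rw [deriv_Tt hf, deriv_Tt hf, deriv_Tt hf]
  change CTₗ hf t ξ lam (timeDerivWindow ξ lam (timeDerivWindow ξ lam (timeDerivWindow ξ lam g))) = _
  simp only [timeDerivWindow_apply, map_sub, map_neg, map_smul, derivCLM_mulX, map_add,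
    map_smulₛₗ, smul_eq_mul, CTₗ_apply, coe_mulX, coe_derivCLM, tw_one_tw, Nat.reduceAdd]
  simp only [map_mul, map_ofNat, conj_ofReal, conj_I]
  ring
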